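/- arXiv:2410.15655 — 4 statements merged into one kernel-verified Lean document; each statement's English description precedes it below -/
import Mathlib

section
/- Let (Ω, F, P) be a probability space, let a ≤ b be real numbers, and let Y : Ω → ℝ satisfy a ≤ Y ≤ b almost surely. Let A ⊆ B be events with P(A) > 0, and set ν := P(A)/P(B) and m := E[Y | B]. Then max{ (m − b·(1 − ν))/ν , a } ≤ E[Y | A] ≤ min{ (m − a·(1 − ν))/ν , b }. -/
open MeasureTheory

/-- Conditional expectation of `Y` given the event `A`: `(∫_A Y dP) / P(A)`. -/
noncomputable def condMean {Ω : Type*} [MeasurableSpace Ω] (P : Measure Ω)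
    (Y : Ω → ℝ) (A : Set Ω) : ℝ :=
  (∫ x in A, Y x ∂P) / (P A).toReal

lemma setIntegral_bdd_aux {Ω : Type*} [MeasurableSpace Ω]
    (P : Measure Ω) [IsProbabilityMeasure P]
    (a b : ℝ) (Y : Ω → ℝ) (hY : Integrable Y P)
    (hbdd : ∀ᵐ x ∂P, a ≤ Y x ∧ Y x ≤ b)
    (S : Set Ω) (hS : MeasurableSet S) :
    a * (P S).toReal ≤ (∫ x in S, Y x ∂P) ∧
      (∫ x in S, Y x ∂P) ≤ b * (P S).toReal := by
  have hres : ∀ᵐ x ∂(P.restrict S), a ≤ Y x ∧ Y x ≤ b := ae_restrict_of_ae hbdd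
  constructor
  · calc a * (P S).toReal = ∫ _ in S, a ∂P := by
          rw [setIntegral_const, smul_eq_mul, mul_comm, measureReal_def]
      _ ≤ ∫ x in S, Y x ∂P := by
          refine integral_mono_ae (integrable_const a) hY.restrict ?_
          filter_upwards [hres] with x hx using hx.1
  · calc (∫ x in S, Y x ∂P) ≤ ∫ _ in S, b ∂P := by
          refine integral_mono_ae hY.restrict (integrable_const b) ?_
          filter_upwards [hres] with x hx using hx.2
      _ = b * (P S).toReal := by rw [setIntegral_const, smul_eq_mul, mul_comm, measureReal_def]

/-- Bounds on the fully conditional mean of a bounded outcome. -/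
theorem condMean_bounds_of_bdd {Ω : Type*} [MeasurableSpace Ω]
    (P : Measure Ω) [IsProbabilityMeasure P]
    (a b : ℝ) (hab : a ≤ b)
    (Y : Ω → ℝ) (hY : Integrable Y P)
    (hbdd : ∀ᵐ x ∂P, a ≤ Y x ∧ Y x ≤ b)
    (A B : Set Ω) (hA : MeasurableSet A) (hB : MeasurableSet B)
    (hAB : A ⊆ B) (hPA : 0 < P A) :
    max ((condMean P Y B - b * (1 - (P A).toReal / (P B).toReal)) /
          ((P A).toReal / (P B).toReal)) a ≤ condMean P Y A ∧
    condMean P Y A ≤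
      min ((condMean P Y B - a * (1 - (P A).toReal / (P B).toReal)) /
          ((P A).toReal / (P B).toReal)) b := by
  set pA := (P A).toReal with hpAdef
  set pB := (P B).toReal with hpBdef
  have hPAne : P A ≠ ⊤ := measure_ne_top P A
  have hPBne : P B ≠ ⊤ := measure_ne_top P B
  have hpA : 0 < pA := ENNReal.toReal_pos hPA.ne' hPAne
  have hle : pA ≤ pB := ENNReal.toReal_mono hPBne (measure_mono hAB)
  have hpB : 0 < pB := lt_of_lt_of_le hpA hle
  set IA := ∫ x in A, Y x ∂P with hIA
  set ID := ∫ x in B \ A, Y x ∂P with hID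
  have hD : MeasurableSet (B \ A) := hB.diff hA
  have hPD : (P (B \ A)).toReal = pB - pA := by
    rw [measure_diff hAB hA.nullMeasurableSet hPAne,
      ENNReal.toReal_sub_of_le (measure_mono hAB) hPBne]
  have hsplit : (∫ x in B, Y x ∂P) = IA + ID := by
    rw [hIA, hID, ← setIntegral_union (disjoint_sdiff_self_right) hD
      hY.integrableOn hY.integrableOn, Set.union_diff_cancel hAB]
  have h1 := setIntegral_bdd_aux P a b Y hY hbdd A hA
  have h2 := setIntegral_bdd_aux P a b Y hY hbdd (B \ A) hD
  rw [hPD] at h2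
  simp only [condMean, hsplit, ← hIA, ← hpAdef, ← hpBdef]
  obtain ⟨h1a, h1b⟩ := h1
  obtain ⟨h2a, h2b⟩ := h2
  refine ⟨max_le ?_ ?_, le_min ?_ ?_⟩
  · rw [div_le_div_iff₀ (by positivity) hpA, div_eq_mul_inv, div_eq_mul_inv]
    have h2b' : ID * pB⁻¹ * pA ≤ b * (pB - pA) * pB⁻¹ * pA := by
      have := mul_le_mul_of_nonneg_right h2b (by positivity : (0:ℝ) ≤ pB⁻¹ * pA)
      linarith [this]
    have h : b * (pB - pA) * pB⁻¹ * pA = b * pA - b * pA * pA * pB⁻¹ := by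
      field_simp
    nlinarith [h2b', h]
  · rw [le_div_iff₀ hpA]; linarith
  · rw [div_le_div_iff₀ hpA (by positivity), div_eq_mul_inv, div_eq_mul_inv]
    have h2a' : a * (pB - pA) * pB⁻¹ * pA ≤ ID * pB⁻¹ * pA := by
      have := mul_le_mul_of_nonneg_right h2a (by positivity : (0:ℝ) ≤ pB⁻¹ * pA)
      linarith [this]
    have h : a * (pB - pA) * pB⁻¹ * pA = a * pA - a * pA * pA * pB⁻¹ := by
      field_simp
    nlinarith [h2a', h]
  · rw [div_le_iff₀ hpA]; linarith
end

section
/- Let (Ω, F, P) be a probability space, let a ≤ b be real numbers, and let Y¹, Y⁰ : Ω → ℝ be integrable random variables with a ≤ Y¹ ≤ b and a ≤ Y⁰ ≤ b almost surely. Let A ⊆ B be events with P(A) > 0, and set ν := P(A)/P(B) and μ := E[Y¹ − Y⁰ | B]. Then γ_ℓ ≤ E[Y¹ − Y⁰ | A] ≤ γ_u, where γ_ℓ := max{ (μ − (b − a)·(1 − ν))/ν , a − b } and γ_u := min{ (μ − (a − b)·(1 − ν))/ν , b − a }. -/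
open MeasureTheory

/-- Theorem 1 of the paper: partial identification bounds on the
fully conditional CATE. -/
theorem cate_partial_identification_bounds {Ω : Type*} [MeasurableSpace Ω]
    (P : Measure Ω) [IsProbabilityMeasure P]
    (a b : ℝ) (hab : a ≤ b)
    (Y1 Y0 : Ω → ℝ) (hY1 : Integrable Y1 P) (hY0 : Integrable Y0 P)
    (hY1bdd : ∀ᵐ x ∂P, a ≤ Y1 x ∧ Y1 x ≤ b)
    (hY0bdd : ∀ᵐ x ∂P, a ≤ Y0 x ∧ Y0 x ≤ b)
    (A B : Set Ω) (hA : MeasurableSet A) (hB : MeasurableSet B)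
    (hAB : A ⊆ B) (hPA : 0 < P A) :
    max ((condMean P (fun x => Y1 x - Y0 x) B -
            (b - a) * (1 - (P A).toReal / (P B).toReal)) /
          ((P A).toReal / (P B).toReal)) (a - b) ≤
        condMean P (fun x => Y1 x - Y0 x) A ∧
    condMean P (fun x => Y1 x - Y0 x) A ≤
      min ((condMean P (fun x => Y1 x - Y0 x) B -
            (a - b) * (1 - (P A).toReal / (P B).toReal)) /
          ((P A).toReal / (P B).toReal)) (b - a) := by
  set Z : Ω → ℝ := fun x => Y1 x - Y0 x with hZdef
  have hZ : Integrable Z P := hY1.sub hY0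
  have hZlb : ∀ᵐ x ∂P, a - b ≤ Z x := by
    filter_upwards [hY1bdd, hY0bdd] with x h1 h0
    have := h1.1; have := h0.2; simp only [hZdef]; linarith
  have hZub : ∀ᵐ x ∂P, Z x ≤ b - a := by
    filter_upwards [hY1bdd, hY0bdd] with x h1 h0
    have := h1.2; have := h0.1; simp only [hZdef]; linarith
  -- integral bounds over any measurable set
  have key_ub : ∀ S : Set Ω, MeasurableSet S →
      ∫ x in S, Z x ∂P ≤ (b - a) * (P S).toReal := by
    intro S hS
    have h1 : ∫ x in S, Z x ∂P ≤ ∫ x in S, (b - a) ∂P := by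
      apply integral_mono_ae hZ.integrableOn (integrableOn_const (measure_ne_top _ _))
      exact ae_restrict_of_ae hZub
    simpa [setIntegral_const, mul_comm, Measure.real] using h1
  have key_lb : ∀ S : Set Ω, MeasurableSet S →
      (a - b) * (P S).toReal ≤ ∫ x in S, Z x ∂P := by
    intro S hS
    have h1 : ∫ x in S, (a - b) ∂P ≤ ∫ x in S, Z x ∂P := by
      apply integral_mono_ae (by exact integrableOn_const (measure_ne_top _ _) : IntegrableOn (fun _ => a - b) S P) hZ.integrableOn
      exact ae_restrict_of_ae hZlb
    simpa [setIntegral_const, mul_comm, Measure.real] using h1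
  set α := (P A).toReal with hα
  set β := (P B).toReal with hβ
  have hα0 : 0 < α := ENNReal.toReal_pos hPA.ne' (measure_ne_top _ _)
  have hαβ : α ≤ β := ENNReal.toReal_mono (measure_ne_top _ _) (measure_mono hAB)
  have hβ0 : 0 < β := lt_of_lt_of_le hα0 hαβ
  have hdiff : ∫ x in B \ A, Z x ∂P = ∫ x in B, Z x ∂P - ∫ x in A, Z x ∂P :=
    integral_diff hA hZ.integrableOn hAB
  have hPdiff : (P (B \ A)).toReal = β - α := by
    rw [measure_diff hAB (hA.nullMeasurableSet) (measure_ne_top _ _)]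
    rw [ENNReal.toReal_sub_of_le (measure_mono hAB) (measure_ne_top _ _)]
  set IA := ∫ x in A, Z x ∂P with hIA
  set IB := ∫ x in B, Z x ∂P with hIB
  have hub1 : IA ≤ IB - (a - b) * (β - α) := by
    have := key_lb (B \ A) (hB.diff hA)
    rw [hPdiff] at this; linarith [hdiff ▸ this]
  have hlb1 : IB - (b - a) * (β - α) ≤ IA := by
    have := key_ub (B \ A) (hB.diff hA)
    rw [hPdiff] at this; linarith [hdiff ▸ this]
  have hubA : IA ≤ (b - a) * α := key_ub A hA
  have hlbA : (a - b) * α ≤ IA := key_lb A hA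
  have hcA : condMean P Z A = IA / α := rfl
  have hcB : condMean P Z B = IB / β := rfl
  constructor
  · rw [max_le_iff]
    constructor
    · rw [hcA, hcB]
      rw [div_le_div_iff₀ (by positivity) hα0]
      have h2 : (IB / β - (b - a) * (1 - α / β)) * β = IB - (b - a) * (β - α) := by
        field_simp
      calc (IB / β - (b - a) * (1 - α / β)) * α
          = ((IB / β - (b - a) * (1 - α / β)) * β) * (α / β) := by
            field_simp
        _ = (IB - (b - a) * (β - α)) * (α / β) := by rw [h2]
        _ ≤ IA * (α / β) + (IB - (b - a) * (β - α)) * (α / β) - IA * (α/β) := by ring_nf; linarith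
        _ ≤ IA * (α / β) := by nlinarith [div_pos hα0 hβ0, mul_le_mul_of_nonneg_right hlb1 (le_of_lt (div_pos hα0 hβ0))]
    · rw [hcA, le_div_iff₀ hα0]; linarith
  · rw [le_min_iff]
    constructor
    · rw [hcA, hcB]
      rw [div_le_div_iff₀ hα0 (by positivity)]
      have h2 : (IB / β - (a - b) * (1 - α / β)) * β = IB - (a - b) * (β - α) := by
        field_simp
      calc IA * (α / β) ≤ (IB - (a - b) * (β - α)) * (α / β) :=
            mul_le_mul_of_nonneg_right hub1 (le_of_lt (div_pos hα0 hβ0))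
        _ = ((IB / β - (a - b) * (1 - α / β)) * β) * (α / β) := by rw [h2]
        _ = (IB / β - (a - b) * (1 - α / β)) * α := by field_simp
    · rw [hcA, div_le_iff₀ hα0]; linarith
end

section
/- Let (Ω, F, P) be a probability space, let τ, τ̂ : Ω → ℝ be measurable, and let M ≥ 0 be a constant with |τ̂(x) − τ(x)| ≤ M for all x ∈ Ω. Then ∫ |τ(x)| · |1{τ̂(x) ≥ 0} − 1{τ(x) ≥ 0}| dP(x) ≤ M · P({x : |τ(x)| ≤ M}). -/
open MeasureTheory

/-- The error from plugging in an estimated indicator is controlled by the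
probability mass of `τ` near the decision boundary. -/
theorem indicator_error_le_margin_mass {Ω : Type*} [MeasurableSpace Ω]
    (P : Measure Ω) [IsProbabilityMeasure P]
    (τ τh : Ω → ℝ) (hτ : Measurable τ) (hτh : Measurable τh)
    (M : ℝ) (hM : 0 ≤ M) (hclose : ∀ x, |τh x - τ x| ≤ M) :
    ∫ x, |τ x| *
        |(if 0 ≤ τh x then (1 : ℝ) else 0) - (if 0 ≤ τ x then (1 : ℝ) else 0)| ∂P ≤
      M * (P {x | |τ x| ≤ M}).toReal := by
  set s : Set Ω := {x | |τ x| ≤ M} with hs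
  have hsm : MeasurableSet s := measurableSet_le (hτ.abs) measurable_const
  set g : Ω → ℝ := fun x =>
    |τ x| * |(if 0 ≤ τh x then (1 : ℝ) else 0) - (if 0 ≤ τ x then (1 : ℝ) else 0)| with hg
  have hgmeas : Measurable g := by
    apply hτ.abs.mul
    apply Measurable.abs
    exact Measurable.sub
      (Measurable.ite (measurableSet_le measurable_const hτh) measurable_const measurable_const)
      (Measurable.ite (measurableSet_le measurable_const hτ) measurable_const measurable_const)
  have hbound : ∀ x, g x ≤ s.indicator (fun _ => M) x := by
    intro x
    by_cases h1 : 0 ≤ τh x <;> by_cases h2 : 0 ≤ τ x <;>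
      simp only [hg, h1, h2, if_true, if_false, sub_self, abs_zero, mul_zero, sub_zero,
        zero_sub, abs_one, abs_neg, mul_one]
    · exact Set.indicator_nonneg (fun _ _ => hM) x
    · have hτM : |τ x| ≤ M := by
        have : -τ x ≤ τh x - τ x := by linarith
        calc |τ x| = -τ x := abs_of_neg (not_le.mp h2)
          _ ≤ τh x - τ x := this
          _ ≤ |τh x - τ x| := le_abs_self _
          _ ≤ M := hclose x
      rw [Set.indicator_of_mem (show x ∈ s from hτM)]; exact hτM
    · have hτM : |τ x| ≤ M := by
        have : τ x ≤ τ x - τh x := by linarith [not_le.mp h1]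
        calc |τ x| = τ x := abs_of_nonneg h2
          _ ≤ τ x - τh x := this
          _ ≤ |τ x - τh x| := le_abs_self _
          _ = |τh x - τ x| := (abs_sub_comm _ _)
          _ ≤ M := hclose x
      rw [Set.indicator_of_mem (show x ∈ s from hτM)]; exact hτM
    · exact Set.indicator_nonneg (fun _ _ => hM) x
  have hgnonneg : ∀ x, 0 ≤ g x := fun x => mul_nonneg (abs_nonneg _) (abs_nonneg _)
  have hind_int : Integrable (s.indicator fun _ => M) P :=
    (integrable_const M).indicator hsm
  have := integral_mono_of_nonneg (f := g) (g := s.indicator fun _ => M)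
    (Filter.Eventually.of_forall hgnonneg) hind_int (Filter.Eventually.of_forall hbound)
  calc ∫ x, g x ∂P ≤ ∫ x, s.indicator (fun _ => M) x ∂P := this
    _ = M * (P s).toReal := by
        rw [integral_indicator_const M hsm]
        simp [smul_eq_mul, mul_comm, Measure.real]
end

section
/- Let (Ω, F, P) be a probability space, let τ, τ̂ : Ω → ℝ be measurable with τ integrable, and let C ≥ 0, α ≥ 0, and M ≥ 0 be constants such that |τ̂(x) − τ(x)| ≤ M for all x ∈ Ω and P({x : |τ(x)| ≤ M}) ≤ C·M^α. Then |∫ τ(x) · (1{τ̂(x) ≥ 0} − 1{τ(x) ≥ 0}) dP(x)| ≤ C · M^{1+α}. -/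
open MeasureTheory

/-- Under the margin condition, replacing the true indicator by a plug-in
estimate introduces bias of order `M^(1+α)`. -/
theorem indicator_plugin_bias_bound {Ω : Type*} [MeasurableSpace Ω]
    (P : Measure Ω) [IsProbabilityMeasure P]
    (τ τh : Ω → ℝ) (hτ : Measurable τ) (hτh : Measurable τh)
    (hint : Integrable τ P)
    (C α M : ℝ) (hC : 0 ≤ C) (hα : 0 ≤ α) (hM : 0 ≤ M)
    (hclose : ∀ x, |τh x - τ x| ≤ M)
    (hmargin : (P {x | |τ x| ≤ M}).toReal ≤ C * M ^ α) :
    |∫ x, τ x *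
        ((if 0 ≤ τh x then (1 : ℝ) else 0) - (if 0 ≤ τ x then (1 : ℝ) else 0)) ∂P| ≤
      C * M ^ (1 + α) := by
  set g : Ω → ℝ := fun x =>
    τ x * ((if 0 ≤ τh x then (1 : ℝ) else 0) - (if 0 ≤ τ x then (1 : ℝ) else 0)) with hg
  set S : Set Ω := {x | |τ x| ≤ M} with hSdef
  have hS : MeasurableSet S := measurableSet_le hτ.abs measurable_const
  -- g vanishes off S
  have hzero : ∀ x ∉ S, g x = 0 := by
    intro x hx
    simp only [hSdef, Set.mem_setOf_eq, not_le] at hx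
    have hc := hclose x
    rw [abs_sub_comm] at hc
    have h1 : (if 0 ≤ τh x then (1 : ℝ) else 0) = (if 0 ≤ τ x then (1 : ℝ) else 0) := by
      by_cases h : 0 ≤ τ x
      · have : 0 ≤ τh x := by
          have := abs_le.mp hc
          nlinarith [abs_of_nonneg h, hx]
        simp [h, this]
      · push_neg at h
        have : ¬ 0 ≤ τh x := by
          have := abs_le.mp hc
          have habs : |τ x| = -τ x := abs_of_neg h
          intro hh
          nlinarith
        simp [not_le.mpr h, this]
    simp [hg, h1]
  have hbound : ∀ x ∈ S, ‖g x‖ ≤ M := by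
    intro x hx
    simp only [hSdef, Set.mem_setOf_eq] at hx
    have h2 : |(if 0 ≤ τh x then (1 : ℝ) else 0) - (if 0 ≤ τ x then (1 : ℝ) else 0)| ≤ 1 := by
      split_ifs <;> norm_num
    calc ‖g x‖ = |τ x| * |(if 0 ≤ τh x then (1 : ℝ) else 0) - (if 0 ≤ τ x then (1 : ℝ) else 0)| := by
          simp [hg, abs_mul]
      _ ≤ M * 1 := mul_le_mul hx h2 (abs_nonneg _) hM
      _ = M := mul_one M
  -- integral over all of Ω equals integral over S
  have hind : g = S.indicator g := by
    funext x
    by_cases hx : x ∈ S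
    · rw [Set.indicator_of_mem hx]
    · rw [Set.indicator_of_notMem hx, hzero x hx]
  have heq : ∫ x, g x ∂P = ∫ x in S, g x ∂P := by
    conv_lhs => rw [hind]
    exact integral_indicator hS
  have hfin : P S < ⊤ := measure_lt_top P S
  have hmain : ‖∫ x in S, g x ∂P‖ ≤ M * (P S).toReal :=
    norm_setIntegral_le_of_norm_le_const hfin hbound
  have : |∫ x, g x ∂P| ≤ M * (C * M ^ α) := by
    rw [heq]
    exact le_trans hmain (by
      exact mul_le_mul_of_nonneg_left hmargin hM)
  calc |∫ x, g x ∂P| ≤ M * (C * M ^ α) := this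
    _ = C * (M ^ (1:ℝ) * M ^ α) := by rw [Real.rpow_one]; ring
    _ = C * M ^ (1 + α) := by
        rw [← Real.rpow_add' hM (by positivity)]
end
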